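/- Let C be a finite maximal prefix-free set in {a,b}* with prefix set P, |P| = n. Let C̃_a be the elements of C not ending in b (taken as {1} if C = {1}), k = |C̃_a|, and i₁ < ⋯ < i_k the ranks of elements of C̃_a in the lexicographic ordering of C. Let M = |{(p,c) : p ∈ P_b \ {1}, c ∈ C_b, p < c}|, where P_b = {1} ∪ (P ∩ {a,b}*b) and C_b = C ∩ {a,b}*b. Then M + Σ_{h=1}^{k} i_h = (n+1)(k−1) + k − k(k−1)/2. -/

import Mathlib

/-
Stripping the trailing `a`s (`false`s) maps `C̃_a` bijectively onto `P_b`: each `c ∈ C̃_a` is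
`q a^m` with `q ∈ P_b`, and maximality of `C` provides such a `c` for every `q ∈ P_b`. Comparing
a word of `C` with `c` amounts to comparing it with `q`, so the rank of `c` in `C` is
`1 + #{c' ∈ C | c' < q}`, and for `p ∈ P_b \ {1}` the words of `C̃_a` above `p` are those whose
stripped form is `≥ p`. Since `p ∉ C`, it splits the `n + 1` words of `C` into those below it,
those of `C_b` above it and those of `C̃_a` above it. Summing over `p ∈ P_b \ {1}`, and counting
the `k (k - 1) / 2` pairs `p ≤ q` in `P_b` with `p ≠ 1`, gives the identity.
-/

/-- A set of words is prefix-free if no element is a proper prefix of another.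
The letter `a` is `false` and the letter `b` is `true`. -/
def PrefixFree (S : Set (List Bool)) : Prop :=
  ∀ u ∈ S, ∀ v ∈ S, u <+: v → u = v

open List Finset

namespace List

theorem append_lt_append_left_iff {α : Type*} [LinearOrder α] (s : List α) {u v : List α} :
    s ++ u < s ++ v ↔ u < v := by
  induction s with
  | nil => rfl
  | cons a s ih => simpa [cons_lt_cons_iff] using ih

theorem lt_append_iff_of_not_prefix {α : Type*} [LinearOrder α] {u v : List α} (w : List α)
    (h : ¬ v <+: u) : u < v ++ w ↔ u < v := by
  induction v generalizing u with
  | nil => exact absurd nil_prefix h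
  | cons b v ih =>
    cases u with
    | nil => exact iff_of_true (nil_lt_cons _ _) (nil_lt_cons _ _)
    | cons a u =>
      rw [cons_append, cons_lt_cons_iff, cons_lt_cons_iff]
      rcases eq_or_ne a b with rfl | hab
      · rw [ih fun hp => h (cons_prefix_cons.2 ⟨rfl, hp⟩)]
      · simp [hab]

theorem prefix_replicate_false_of_lt {t : List Bool} {m : ℕ} (h : t < replicate m false) :
    t <+: replicate m false := by
  induction m generalizing t with
  | zero => exact absurd h (not_lt_nil _)
  | succ m ih =>
    cases t with
    | nil => exact nil_prefix
    | cons x t =>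
      rw [replicate_succ, cons_lt_cons_iff] at h
      rcases h with hx | ⟨rfl, ht⟩
      · exact absurd hx not_lt_bot
      · exact cons_prefix_cons.2 ⟨rfl, ih ht⟩

theorem IsPrefix.lt_of_ne {α : Type*} [LinearOrder α] {u v : List α} (h : u <+: v)
    (hne : u ≠ v) : u < v :=
  (not_lt.1 h.le).lt_of_ne hne

end List

def dropTrailingFalse (w : List Bool) : List Bool := w.rdropWhile (! ·)

theorem dropTrailingFalse_prefix (w : List Bool) : dropTrailingFalse w <+: w :=
  rdropWhile_prefix _ _

theorem exists_eq_dropTrailingFalse_append_replicate (w : List Bool) :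
    ∃ m, w = dropTrailingFalse w ++ replicate m false := by
  refine ⟨(w.rtakeWhile (! ·)).length, ?_⟩
  have hfalse : w.rtakeWhile (! ·) = replicate _ false :=
    eq_replicate_iff.2 ⟨rfl, fun b hb => by simpa using mem_rtakeWhile_imp hb⟩
  rw [dropTrailingFalse, ← hfalse, rdropWhile_append_rtakeWhile]

theorem dropTrailingFalse_eq_nil_or_getLast? (w : List Bool) :
    dropTrailingFalse w = [] ∨ (dropTrailingFalse w).getLast? = some true := by
  refine or_iff_not_imp_left.2 fun hne => ?_
  rw [getLast?_eq_some_getLast hne]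
  unfold dropTrailingFalse at hne ⊢
  simpa using rdropWhile_last_not (! ·) w hne

theorem dropTrailingFalse_append_replicate {q : List Bool}
    (hq : q = [] ∨ q.getLast? = some true) (m : ℕ) :
    dropTrailingFalse (q ++ replicate m false) = q := by
  induction m with
  | zero =>
    rw [replicate_zero, append_nil, dropTrailingFalse, rdropWhile_eq_self_iff]
    intro hne
    simpa [getLast?_eq_some_getLast hne, hne] using hq
  | succ m ih =>
    rwa [replicate_succ', ← append_assoc, dropTrailingFalse, rdropWhile_concat_pos _ _ _ rfl]

theorem lt_dropTrailingFalse_iff {u w : List Bool} (h : ¬ u <+: w) :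
    u < dropTrailingFalse w ↔ u < w := by
  obtain ⟨m, hm⟩ := exists_eq_dropTrailingFalse_append_replicate w
  set q := dropTrailingFalse w
  by_cases hq : q <+: u
  · obtain ⟨t, rfl⟩ := hq
    refine iff_of_false (prefix_append q t).le ?_
    rw [hm, append_lt_append_left_iff]
    intro ht
    apply h
    rw [hm]
    exact (prefix_append_right_inj q).2 (prefix_replicate_false_of_lt ht)
  · rw [hm, lt_append_iff_of_not_prefix _ hq]

theorem lt_iff_le_dropTrailingFalse {u w : List Bool} (hu : u.getLast? = some true)
    (hw : w.getLast? ≠ some true) : u < w ↔ u ≤ dropTrailingFalse w := by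
  obtain ⟨m, hm⟩ := exists_eq_dropTrailingFalse_append_replicate w
  set q := dropTrailingFalse w
  by_cases hq : q <+: u
  · obtain ⟨t, rfl⟩ := hq
    rcases eq_or_ne t [] with rfl | ht
    · rw [append_nil] at hu ⊢
      exact iff_of_true ((dropTrailingFalse_prefix w).lt_of_ne fun he => hw (he ▸ hu)) le_rfl
    · rw [getLast?_append_of_ne_nil _ ht] at hu
      refine iff_of_false ?_ (not_le.2 ((prefix_append q t).lt_of_ne (by simpa using ht.symm)))
      rw [hm, append_lt_append_left_iff]
      intro hlt
      obtain ⟨-, ht'⟩ := prefix_replicate_iff.1 (prefix_replicate_false_of_lt hlt)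
      rw [ht', getLast?_replicate] at hu
      simp at hu
  · rw [hm, lt_append_iff_of_not_prefix _ hq, lt_iff_le_and_ne]
    exact and_iff_left (by rintro rfl; exact hq prefix_rfl)

theorem Finset.two_mul_sum_card_filter_le {α : Type*} [LinearOrder α] (s : Finset α) :
    2 * ∑ x ∈ s, #{y ∈ s | x ≤ y} = #s * (#s + 1) := by
  have hswap : ∑ x ∈ s, #{y ∈ s | x ≤ y} = ∑ x ∈ s, #{y ∈ s | y ≤ x} := by
    simp only [card_filter]
    exact sum_comm
  have hpair : ∀ x ∈ s, #{y ∈ s | x ≤ y} + #{y ∈ s | y ≤ x} = #s + 1 := by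
    intro x hx
    have hboth : {y ∈ s | x ≤ y ∧ y ≤ x} = {x} := by
      ext y
      simp only [mem_filter, mem_singleton, ← le_antisymm_iff]
      exact ⟨fun h => h.2.symm, fun h => ⟨h ▸ hx, h.symm⟩⟩
    rw [← card_union_add_card_inter, ← filter_or, ← filter_and, hboth,
      filter_true_of_mem fun y _ => le_total x y, card_singleton]
  calc 2 * ∑ x ∈ s, #{y ∈ s | x ≤ y}
      = ∑ x ∈ s, (#{y ∈ s | x ≤ y} + #{y ∈ s | y ≤ x}) := by
        rw [two_mul, sum_add_distrib, ← hswap]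
    _ = #s * (#s + 1) := by rw [sum_congr rfl hpair, sum_const, smul_eq_mul]

theorem Finset.card_filter_product {α β : Type*} (s : Finset α) (t : Finset β)
    (r : α → β → Prop) [DecidableRel r] :
    #{x ∈ s ×ˢ t | r x.1 x.2} = ∑ a ∈ s, #{b ∈ t | r a b} := by
  simp only [card_filter, sum_product]

theorem Finset.card_filter_lt_add_card_filter_gt {α : Type*} [LinearOrder α] {s : Finset α}
    {a : α} [DecidablePred (· < a)] [DecidablePred (a < ·)] (ha : a ∉ s) :
    #{x ∈ s | x < a} + #{x ∈ s | a < x} = #s := by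
  rw [← card_filter_add_card_filter_not (s := s) (p := fun x => x < a)]
  congr 2
  apply filter_congr
  intro x hx
  rw [not_lt, le_iff_eq_or_lt, or_iff_right (ne_of_mem_of_not_mem hx ha).symm]

theorem Finset.two_mul_sum_card_filter_le_insert {α : Type*} [LinearOrder α] [DecidableEq α]
    {s : Finset α} {a : α} (ha : a ∉ s) (hmin : ∀ x ∈ s, a ≤ x) :
    2 * ∑ x ∈ s, #{y ∈ insert a s | x ≤ y} = #s * (#s + 1) := by
  have h := two_mul_sum_card_filter_le (insert a s)
  have hall : {y ∈ insert a s | a ≤ y} = insert a s :=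
    filter_true_of_mem fun y hy => (mem_insert.1 hy).elim (fun h => h.ge) (hmin y)
  rw [sum_insert ha, hall, card_insert_of_notMem ha] at h
  nlinarith [h]

theorem PrefixFree.exists_prefix_or_prefix_of_maximal {S : Set (List Bool)}
    (hpf : PrefixFree S) (hmax : ∀ w : List Bool, w ∉ S → ¬ PrefixFree (insert w S))
    {w : List Bool} (hw : w ∉ S) : ∃ c ∈ S, c <+: w ∨ w <+: c := by
  have h := hmax w hw
  unfold PrefixFree at h
  push Not at h
  obtain ⟨u, hu, v, hv, huv, hne⟩ := h
  rcases hu with rfl | hu <;> rcases hv with rfl | hv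
  · exact absurd rfl hne
  · exact ⟨v, hv, Or.inr huv⟩
  · exact ⟨u, hu, Or.inl huv⟩
  · exact absurd (hpf u hu v hv huv) hne

theorem PrefixFree.injOn_dropTrailingFalse {S : Set (List Bool)} (hpf : PrefixFree S) :
    Set.InjOn dropTrailingFalse S := by
  intro c₁ h₁ c₂ h₂ he
  obtain ⟨m₁, hm₁⟩ := exists_eq_dropTrailingFalse_append_replicate c₁
  obtain ⟨m₂, hm₂⟩ := exists_eq_dropTrailingFalse_append_replicate c₂
  wlog hle : m₁ ≤ m₂ generalizing c₁ c₂ m₁ m₂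
  · exact (this h₂ h₁ he.symm m₂ hm₂ m₁ hm₁ (le_of_not_ge hle)).symm
  refine hpf c₁ h₁ c₂ h₂ ?_
  rw [hm₁, hm₂, he]
  exact (prefix_append_right_inj _).2 (prefix_replicate_iff.2 (by simpa using hle))

section PrefixCode

variable {C P : Finset (List Bool)}

theorem PrefixFree.not_prefix_of_mem_proper (hpf : PrefixFree (C : Set (List Bool)))
    (hP : ∀ p : List Bool, p ∈ P ↔ ∃ c ∈ C, p <+: c ∧ p ≠ c) {p c : List Bool}
    (hp : p ∈ P) (hc : c ∈ C) : ¬ c <+: p := by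
  intro hcp
  obtain ⟨c', hc', hpc', hne⟩ := (hP p).1 hp
  obtain rfl := hpf c hc c' hc' (hcp.trans hpc')
  exact hne (hpc'.eq_of_length_le hcp.length_le)

theorem dropTrailingFalse_mem_of_mem
    (hP : ∀ p : List Bool, p ∈ P ↔ ∃ c ∈ C, p <+: c ∧ p ≠ c) {c : List Bool}
    (hc : c ∈ C) (hlast : c.getLast? ≠ some true) :
    dropTrailingFalse c = [] ∨
      dropTrailingFalse c ∈ P ∧ (dropTrailingFalse c).getLast? = some true := by
  refine (dropTrailingFalse_eq_nil_or_getLast? c).imp_right fun h => ⟨?_, h⟩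
  exact (hP _).2 ⟨c, hc, dropTrailingFalse_prefix c, fun he => hlast (he ▸ h)⟩

theorem PrefixFree.card_filter_le (hpf : PrefixFree (C : Set (List Bool))) {c : List Bool}
    (hc : c ∈ C) : #{c' ∈ C | c' ≤ c} = #{c' ∈ C | c' < dropTrailingFalse c} + 1 := by
  have hle : {c' ∈ C | c' ≤ c} = insert c {c' ∈ C | c' < dropTrailingFalse c} := by
    ext c'
    simp only [Finset.mem_filter, Finset.mem_insert]
    rcases eq_or_ne c' c with rfl | hne
    · simp [hc]
    · simp only [hne, false_or, le_iff_eq_or_lt]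
      exact and_congr_right fun hc' =>
        (lt_dropTrailingFalse_iff fun h => hne (hpf c' hc' c hc h)).symm
  rw [hle, Finset.card_insert_of_notMem]
  rw [Finset.mem_filter, not_and]
  exact fun _ => (dropTrailingFalse_prefix c).le

structure IsMaximalPrefixCode (C P : Finset (List Bool)) : Prop where
  prefixFree : PrefixFree (C : Set (List Bool))
  maximal : ∀ w : List Bool, w ∉ C → ¬ PrefixFree (insert w (C : Set (List Bool)))
  mem_iff : ∀ p : List Bool, p ∈ P ↔ ∃ c ∈ C, p <+: c ∧ p ≠ c

namespace IsMaximalPrefixCode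

theorem exists_dropTrailingFalse_eq (h : IsMaximalPrefixCode C P) {q : List Bool}
    (hq : q = [] ∨ q ∈ P ∧ q.getLast? = some true) :
    ∃ c ∈ C, c.getLast? ≠ some true ∧ dropTrailingFalse c = q := by
  -- `q a^N` with `N` longer than every word of `C` can only be comparable with some `q a^j ∈ C`.
  set N := C.sup length + 1
  have hlong : ∀ c ∈ C, ¬ q ++ replicate N false <+: c := fun c hc hwc => by
    have hc : c.length ≤ C.sup length := le_sup hc
    have hwc := hwc.length_le
    simp only [length_append, length_replicate] at hwc
    omega
  obtain ⟨c, hc, hcw | hwc⟩ :=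
    h.prefixFree.exists_prefix_or_prefix_of_maximal h.maximal fun hw => hlong _ hw prefix_rfl
  swap
  · exact absurd hwc (hlong c hc)
  have hqc : q <+: c := by
    refine (prefix_or_prefix_of_prefix (prefix_append _ _) hcw).elim id fun hcq => ?_
    rcases hq with rfl | ⟨hqP, -⟩
    · exact nil_prefix
    · exact absurd hcq (h.prefixFree.not_prefix_of_mem_proper h.mem_iff hqP hc)
  obtain ⟨t, rfl⟩ := hqc
  have ht : t = replicate t.length false :=
    (prefix_replicate_iff.1 ((prefix_append_right_inj q).1 hcw)).2
  refine ⟨q ++ t, hc, ?_, ?_⟩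
  · rcases eq_or_ne t [] with rfl | htne
    · rcases hq with rfl | ⟨hqP, -⟩
      · simp
      · exact absurd prefix_rfl
          (h.prefixFree.not_prefix_of_mem_proper h.mem_iff hqP (by simpa using hc))
    · rw [getLast?_append_of_ne_nil _ htne, ht, getLast?_replicate]
      simp [htne]
  · rw [ht]
    exact dropTrailingFalse_append_replicate (hq.imp_right And.right) _

theorem image_dropTrailingFalse (h : IsMaximalPrefixCode C P) :
    {c ∈ C | c.getLast? ≠ some true}.image dropTrailingFalse
      = insert [] {p ∈ P | p.getLast? = some true} := by
  ext q
  simp only [Finset.mem_image, Finset.mem_filter, Finset.mem_insert]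
  constructor
  · rintro ⟨c, ⟨hc, hlast⟩, rfl⟩
    exact dropTrailingFalse_mem_of_mem h.mem_iff hc hlast
  · intro hq
    obtain ⟨c, hc, hlast, rfl⟩ := h.exists_dropTrailingFalse_eq hq
    exact ⟨c, ⟨hc, hlast⟩, rfl⟩

theorem injOn_dropTrailingFalse (h : IsMaximalPrefixCode C P) :
    Set.InjOn dropTrailingFalse (C.filter fun c => c.getLast? ≠ some true : Set (List Bool)) :=
  h.prefixFree.injOn_dropTrailingFalse.mono (coe_subset.2 (Finset.filter_subset _ _))

theorem card_filter_getLast?_ne (h : IsMaximalPrefixCode C P) :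
    #{c ∈ C | c.getLast? ≠ some true} = #{p ∈ P | p.getLast? = some true} + 1 := by
  rw [← card_image_of_injOn h.injOn_dropTrailingFalse, h.image_dropTrailingFalse,
    card_insert_of_notMem (by simp)]

theorem sum_card_filter_le (h : IsMaximalPrefixCode C P) :
    ∑ c ∈ {c ∈ C | c.getLast? ≠ some true}, #{c' ∈ C | c' ≤ c}
      = #{c ∈ C | c.getLast? ≠ some true}
        + ∑ p ∈ {p ∈ P | p.getLast? = some true}, #{c ∈ C | c < p} := by
  rw [sum_congr rfl fun c hc => h.prefixFree.card_filter_le (mem_filter.1 hc).1,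
    sum_add_distrib, sum_const, smul_eq_mul, mul_one, add_comm,
    ← sum_image (f := fun q => #{c ∈ C | c < q}) h.injOn_dropTrailingFalse,
    h.image_dropTrailingFalse, sum_insert (by simp)]
  simp

theorem card_filter_getLast?_ne_gt (h : IsMaximalPrefixCode C P) {p : List Bool}
    (hp : p.getLast? = some true) :
    #{c ∈ {c ∈ C | c.getLast? ≠ some true} | p < c}
      = #{q ∈ insert [] {p ∈ P | p.getLast? = some true} | p ≤ q} := by
  rw [← h.image_dropTrailingFalse, filter_image,
    card_image_of_injOn
      (h.injOn_dropTrailingFalse.mono (coe_subset.2 (Finset.filter_subset _ _)))]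
  congr 1
  exact filter_congr fun c hc => lt_iff_le_dropTrailingFalse hp (mem_filter.1 hc).2

theorem sum_card_filter_gt_add_lt_add_ge (h : IsMaximalPrefixCode C P) :
    ∑ p ∈ {p ∈ P | p.getLast? = some true},
        #{c ∈ {c ∈ C | c.getLast? = some true} | p < c}
      + ∑ p ∈ {p ∈ P | p.getLast? = some true}, #{c ∈ C | c < p}
      + ∑ p ∈ {p ∈ P | p.getLast? = some true},
          #{q ∈ insert [] {p ∈ P | p.getLast? = some true} | p ≤ q}
      = #{p ∈ P | p.getLast? = some true} * #C := by
  rw [← sum_add_distrib, ← sum_add_distrib, ← smul_eq_mul, ← sum_const]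
  refine sum_congr rfl fun p hp => ?_
  obtain ⟨hpP, hlast⟩ := mem_filter.1 hp
  have hpC : p ∉ C := fun hpC =>
    h.prefixFree.not_prefix_of_mem_proper h.mem_iff hpP hpC prefix_rfl
  have hsplit : #{c ∈ C | c < p} + #{c ∈ C | p < c} = #C :=
    card_filter_lt_add_card_filter_gt hpC
  rw [← h.card_filter_getLast?_ne_gt hlast, ← hsplit,
    ← card_filter_add_card_filter_not (s := {c ∈ C | p < c})
      (p := fun c => c.getLast? = some true),
    Finset.filter_comm, Finset.filter_comm (fun c : List Bool => c.getLast? ≠ some true)]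
  simp only [ne_eq]
  omega

end IsMaximalPrefixCode

end PrefixCode

theorem stmt16_general (C P : Finset (List Bool)) (n : ℕ)
    (hpf : PrefixFree (↑C : Set (List Bool)))
    (hmax : ∀ w : List Bool, w ∉ C → ¬ PrefixFree (insert w (↑C : Set (List Bool))))
    (hP : ∀ p : List Bool, p ∈ P ↔ ∃ c ∈ C, p <+: c ∧ p ≠ c)
    (hC : C.card = n + 1) :
    {pc : List Bool × List Bool |
        pc.1 ∈ P ∧ pc.1.getLast? = some true ∧ pc.2 ∈ C ∧ pc.2.getLast? = some true ∧
        List.Lex (· < ·) pc.1 pc.2}.ncard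
      + ∑ c ∈ C.filter (fun w => w.getLast? ≠ some true),
          {c' : List Bool | c' ∈ C ∧ (c' = c ∨ List.Lex (· < ·) c' c)}.ncard
    = (n + 1) * ((C.filter (fun w => w.getLast? ≠ some true)).card - 1)
        + (C.filter (fun w => w.getLast? ≠ some true)).card
        - (C.filter (fun w => w.getLast? ≠ some true)).card *
            ((C.filter (fun w => w.getLast? ≠ some true)).card - 1) / 2 := by
  have hpairs : {pc : List Bool × List Bool |
        pc.1 ∈ P ∧ pc.1.getLast? = some true ∧ pc.2 ∈ C ∧ pc.2.getLast? = some true ∧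
        List.Lex (· < ·) pc.1 pc.2}.ncard
      = ∑ p ∈ {p ∈ P | p.getLast? = some true},
          #{c ∈ {c ∈ C | c.getLast? = some true} | p < c} := by
    rw [← card_filter_product, ← Set.ncard_coe_finset]
    congr 1
    ext ⟨p, c⟩
    simp [and_assoc]
  have hrank : ∀ c, {c' : List Bool | c' ∈ C ∧ (c' = c ∨ List.Lex (· < ·) c' c)}.ncard
      = #{c' ∈ C | c' ≤ c} := fun c => by
    rw [← Set.ncard_coe_finset]
    congr 1
    ext c'
    simp [le_iff_eq_or_lt]
  have hcode : IsMaximalPrefixCode C P := ⟨hpf, hmax, hP⟩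
  have hcount := hcode.sum_card_filter_gt_add_lt_add_ge
  have htriangle : 2 * ∑ p ∈ {p ∈ P | p.getLast? = some true},
        #{q ∈ insert [] {p ∈ P | p.getLast? = some true} | p ≤ q}
      = #{p ∈ P | p.getLast? = some true} * (#{p ∈ P | p.getLast? = some true} + 1) :=
    two_mul_sum_card_filter_le_insert (by simp) fun q _ => not_lt.1 (not_lt_nil q)
  rw [hpairs, sum_congr rfl fun c _ => hrank c, hcode.sum_card_filter_le,
    hcode.card_filter_getLast?_ne, Nat.add_sub_cancel]
  rw [hC] at hcount
  generalize #{p ∈ P | p.getLast? = some true} = k at *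
  rw [Nat.mul_comm (k + 1) k, Nat.mul_comm (n + 1) k]
  generalize k * (n + 1) = a at *
  generalize k * (k + 1) = b at *
  omega

/-- Let C be a finite maximal prefix-free set with |C| = n+1 and P its set of proper
prefixes, |P| = n. Let C̃_a be the words of C not ending in b, k = |C̃_a|, and
i₁ < … < i_k their ranks in the lexicographic ordering of C (the rank of c being the
number of c' ∈ C with c' ≤ c).  With
M = |{(p,c) : p ∈ P_b \ {1}, c ∈ C_b, p < c}| one has
M + Σ i_h = (n+1)(k−1) + k − k(k−1)/2. -/
theorem stmt16 (C P : Finset (List Bool)) (n : ℕ)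
    (hpf : PrefixFree (↑C : Set (List Bool)))
    (hmax : ∀ w : List Bool, w ∉ C → ¬ PrefixFree (insert w (↑C : Set (List Bool))))
    (hP : ∀ p : List Bool, p ∈ P ↔ ∃ c ∈ C, p <+: c ∧ p ≠ c)
    (hn : P.card = n) (hC : C.card = n + 1) :
    {pc : List Bool × List Bool |
        pc.1 ∈ P ∧ pc.1.getLast? = some true ∧ pc.2 ∈ C ∧ pc.2.getLast? = some true ∧
        List.Lex (· < ·) pc.1 pc.2}.ncard
      + ∑ c ∈ C.filter (fun w => w.getLast? ≠ some true),
          {c' : List Bool | c' ∈ C ∧ (c' = c ∨ List.Lex (· < ·) c' c)}.ncard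
    = (n + 1) * ((C.filter (fun w => w.getLast? ≠ some true)).card - 1)
        + (C.filter (fun w => w.getLast? ≠ some true)).card
        - (C.filter (fun w => w.getLast? ≠ some true)).card *
            ((C.filter (fun w => w.getLast? ≠ some true)).card - 1) / 2 :=
  stmt16_general C P n hpf hmax hP hC
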